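/- arXiv:2603.26925 — 2 statements merged into one kernel-verified Lean document; each statement's English description precedes it below -/
import Mathlib

section
/- Let f be a semisimple (diagonalizable over the algebraic closure) endomorphism of a finite-dimensional vector space V over a field k, and let W ⊆ V be an f-stable subspace such that the inclusion induces an isomorphism {w ∈ W : f(w) = w} ≅ {v ∈ V : f(v) = v}. Then the induced endomorphism f̄ of V/W has no nonzero fixed vector; equivalently, det(id − f̄) ≠ 0 on V/W. -/
/-! A semisimple `f` gives `W` an `f`-stable complement `U`, which maps isomorphically and
`f`-equivariantly onto `V ⧸ W`. A fixed vector of `f̄` thus lifts to some `u ∈ U` with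
`f u - u ∈ W ∩ U = 0`, i.e. to a fixed vector of `f`, which lies in `W` by hypothesis. -/

namespace Module.End.IsSemisimple

variable {R M : Type*} [CommRing R] [AddCommGroup M] [Module R M]

theorem exists_fixed_lift_of_mapQ_apply_eq {f : Module.End R M} (hf : f.IsSemisimple)
    {W : Submodule R M} (hW : W ≤ W.comap f) {x : M ⧸ W} (hx : W.mapQ W f hW x = x) :
    ∃ v : M, f v = v ∧ W.mkQ v = x := by
  obtain ⟨U, hU, hWU⟩ := isSemisimple_iff.mp hf W hW
  obtain ⟨⟨u, hu⟩, rfl⟩ := (Submodule.quotientEquivOfIsCompl W U hWU).symm.surjective x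
  refine ⟨u, ?_, by simp⟩
  have hmem : f u - u ∈ W := by
    simpa [Submodule.Quotient.eq] using hx
  have hzero : f u - u = 0 :=
    (Submodule.disjoint_def.mp hWU.disjoint) _ hmem (U.sub_mem (hU hu) hu)
  exact sub_eq_zero.mp hzero

end Module.End.IsSemisimple

theorem LinearMap.det_id_sub_ne_zero {R M : Type*} [CommRing R] [IsDomain R] [AddCommGroup M]
    [Module R M] [Module.Free R M] [Module.Finite R M] {g : Module.End R M}
    (hg : ∀ x : M, g x = x → x = 0) : LinearMap.det (LinearMap.id - g) ≠ 0 := by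
  rw [Ne, LinearMap.det_eq_zero_iff_ker_ne_bot, not_not, LinearMap.ker_eq_bot']
  intro x hx
  exact hg x (sub_eq_zero.mp hx).symm

/-- if `f` is a semisimple endomorphism of a finite-dimensional vector space `V`
and `W` is an `f`-stable subspace containing all the `f`-fixed vectors of `V` (so that the
inclusion induces an isomorphism on fixed subspaces), then the induced endomorphism of `V/W`
has no nonzero fixed vector; equivalently `det (id - f̄) ≠ 0`. -/
theorem stmt3 {k V : Type*} [Field k] [AddCommGroup V] [Module k V] [FiniteDimensional k V]
    (f : Module.End k V) (hf : f.IsSemisimple)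
    (W : Submodule k V) (hW : W ≤ W.comap f)
    (hfix : ∀ v : V, f v = v → v ∈ W) :
    (∀ x : V ⧸ W, Submodule.mapQ W W f hW x = x → x = 0) ∧
    LinearMap.det (LinearMap.id - Submodule.mapQ W W f hW) ≠ 0 := by
  have hfixQ : ∀ x : V ⧸ W, Submodule.mapQ W W f hW x = x → x = 0 := by
    intro x hx
    obtain ⟨v, hv, rfl⟩ := hf.exists_fixed_lift_of_mapQ_apply_eq hW hx
    exact (Submodule.Quotient.mk_eq_zero W).mpr (hfix v hv)
  exact ⟨hfixQ, LinearMap.det_id_sub_ne_zero hfixQ⟩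
end

section
/- Let α be an endomorphism of a finite-dimensional vector space V over a field k of characteristic zero. Then in the polynomial ring k[t] one has the identity det(id_V − t·α) = Σ_{n=0}^{dim V} (−1)^n · tr(Λ^n α) · t^n, where Λ^n α denotes the induced endomorphism of the n-th exterior power of V. In particular det(id_V − α) = Σ_{n} (−1)^n tr(Λ^n α). -/
/-!
Expand `det (1 - c • A)` multilinearly in the rows of `1 + (-c) • A`: every row is taken either
from `1` or from `-c • A`, and the term for the set `S` of rows taken from `-c • A` is
`(-c) ^ |S| * det A[S, S]`. On the other side, in the basis of `⋀ⁿ V` made of the wedges `e_S`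
of basis vectors of `V`, the diagonal coefficient of `⋀ⁿ α` at `e_S` is the same principal minor
`det A[S, S]`, so `tr (⋀ⁿ α)` is the sum of the `n × n` principal minors of `A`.
-/

open Polynomial ExteriorAlgebra

section
variable {k V : Type*} [Field k] [AddCommGroup V] [Module k V]

lemma exteriorAlgebraMap_mem_exteriorPower (α : V →ₗ[k] V) (n : ℕ) :
    ∀ x ∈ ⋀[k]^n V, ExteriorAlgebra.map α x ∈ ⋀[k]^n V := by
  intro x hx
  rw [← ιMulti_span_fixedDegree] at hx ⊢
  induction hx using Submodule.span_induction with
  | mem x h =>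
    obtain ⟨v, rfl⟩ := h
    rw [map_apply_ιMulti]
    exact Submodule.subset_span ⟨_, rfl⟩
  | zero => simp
  | add x y _ _ hx' hy' => rw [map_add]; exact Submodule.add_mem _ hx' hy'
  | smul c x _ hx' => rw [map_smul]; exact Submodule.smul_mem _ _ hx'

noncomputable def exteriorPowerMap (n : ℕ) (α : V →ₗ[k] V) :
    ⋀[k]^n V →ₗ[k] ⋀[k]^n V :=
  (ExteriorAlgebra.map α).toLinearMap.restrict (exteriorAlgebraMap_mem_exteriorPower α n)

end

theorem exteriorPowerMap_eq_map {k V : Type*} [Field k] [AddCommGroup V] [Module k V] (n : ℕ)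
    (α : V →ₗ[k] V) : exteriorPowerMap n α = exteriorPower.map n α := by
  ext v
  simp only [LinearMap.compAlternatingMap_apply, exteriorPower.map_apply_ιMulti,
    exteriorPower.ιMulti_apply_coe]
  exact ExteriorAlgebra.map_apply_ιMulti α v

namespace Matrix

variable {n R : Type*} [Fintype n] [DecidableEq n] [CommRing R]

theorem det_one_add_eq_sum_det_submatrix (B : Matrix n n R) :
    (1 + B).det = ∑ s : Finset n, (B.submatrix (↑) (↑) : Matrix s s R).det := by
  have hrows : (1 + B).det =
      detRowAlternating.toMultilinearMap (B.row + (1 : Matrix n n R).row) := by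
    rw [add_comm]; rfl
  rw [hrows, MultilinearMap.map_add_univ]
  exact Finset.sum_congr rfl fun s _ ↦ det_piecewise_one_eq_submatrix_det B s

theorem det_one_sub_smul_eq_sum (c : R) (A : Matrix n n R) :
    (1 - c • A).det = ∑ k ∈ Finset.range (Fintype.card n + 1),
      (-c) ^ k * ∑ s ∈ Finset.univ.powersetCard k,
        (A.submatrix (Subtype.val : s → n) (Subtype.val : s → n)).det := by
  have hcard : ∀ s ∈ (Finset.univ : Finset (Finset n)),
      s.card ∈ Finset.range (Fintype.card n + 1) :=
    fun s _ ↦ Finset.mem_range_succ_iff.mpr s.card_le_univ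
  rw [sub_eq_add_neg, ← neg_smul, det_one_add_eq_sum_det_submatrix,
    ← Finset.sum_fiberwise_of_maps_to hcard]
  refine Finset.sum_congr rfl fun k _ ↦ ?_
  rw [Finset.mul_sum, Finset.powersetCard_eq_filter, Finset.powerset_univ]
  refine Finset.sum_congr rfl fun s hs ↦ ?_
  rw [submatrix_smul, Pi.smul_apply, Pi.smul_apply, det_smul, Fintype.card_coe, (Finset.mem_filter.mp hs).2]

end Matrix

namespace exteriorPower

open Module

variable {R M ι : Type*} [CommRing R] [AddCommGroup M] [Module R M] [Fintype ι] [LinearOrder ι]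

theorem toMatrix_map_apply_self (b : Basis ι R M) (f : M →ₗ[R] M) {n : ℕ}
    (s : Set.powersetCard ι n) :
    LinearMap.toMatrix (b.exteriorPower n) (b.exteriorPower n) (map n f) s s =
        ((LinearMap.toMatrix b b f).submatrix (Subtype.val : s.val → ι) Subtype.val).det := by
  rw [LinearMap.toMatrix_apply, basis_repr_apply, basis_apply, map_apply_ιMulti_family,
    ιMulti_family, ιMultiDual_apply_ιMulti, ← Matrix.det_transpose,
    ← Matrix.det_submatrix_equiv_self (Set.powersetCard.orderIsoOfFin s).toEquiv]
  congr 1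
  ext i j
  simp only [Matrix.transpose_apply, Matrix.of_apply, Matrix.submatrix_apply,
    LinearMap.toMatrix_apply, Basis.coord_apply, Function.comp_apply]
  -- `ofFinEmbEquiv.symm s` is the increasing enumeration `Fin n ≃o s` followed by the inclusion
  rfl

theorem trace_map_eq_sum_det_submatrix (b : Basis ι R M) (f : M →ₗ[R] M) (n : ℕ) :
    LinearMap.trace R (⋀[R]^n M) (map n f) =
      ∑ s ∈ Finset.univ.powersetCard n,
        ((LinearMap.toMatrix b b f).submatrix (Subtype.val : s → ι) Subtype.val).det := by
  rw [LinearMap.trace_eq_matrix_trace R (b.exteriorPower n), Matrix.trace,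
    Finset.sum_subtype (Finset.univ.powersetCard n) (p := (· ∈ Set.powersetCard ι n))
      (fun s ↦ Finset.mem_powersetCard_univ)]
  exact Finset.sum_congr rfl fun s _ ↦ toMatrix_map_apply_self b f s

theorem det_one_sub_smul_toMatrix_eq_sum_trace {A : Type*} [CommRing A] [Algebra R A]
    (b : Basis ι R M) (f : M →ₗ[R] M) (c : A) :
    (1 - c • (LinearMap.toMatrix b b f).map (algebraMap R A)).det =
      ∑ n ∈ Finset.range (Fintype.card ι + 1),
        (-c) ^ n * algebraMap R A (LinearMap.trace R (⋀[R]^n M) (map n f)) := by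
  rw [Matrix.det_one_sub_smul_eq_sum]
  refine Finset.sum_congr rfl fun n _ ↦ ?_
  rw [trace_map_eq_sum_det_submatrix b, map_sum]
  simp only [RingHom.map_det, RingHom.mapMatrix_apply, Matrix.submatrix_map]

end exteriorPower

theorem stmt6_general {k V : Type*} [Field k] [AddCommGroup V] [Module k V]
    [FiniteDimensional k V] (α : V →ₗ[k] V) :
    (LinearMap.det (LinearMap.id - (Polynomial.X : k[X]) • LinearMap.baseChange k[X] α) =
      ∑ n ∈ Finset.range (Module.finrank k V + 1),
        (-1 : k[X]) ^ n * Polynomial.C (LinearMap.trace k (⋀[k]^n V) (exteriorPowerMap n α)) *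
          Polynomial.X ^ n) ∧
    (LinearMap.det (LinearMap.id - α) =
      ∑ n ∈ Finset.range (Module.finrank k V + 1),
        (-1 : k) ^ n * LinearMap.trace k (⋀[k]^n V) (exteriorPowerMap n α)) := by
  let b := Module.finBasis k V
  simp only [exteriorPowerMap_eq_map]
  constructor
  · let bX : Module.Basis (Fin (Module.finrank k V)) k[X] (TensorProduct k k[X] V) :=
      Algebra.TensorProduct.basis k[X] b
    rw [← LinearMap.det_toMatrix bX, map_sub (LinearMap.toMatrix bX bX), map_smul,
      LinearMap.toMatrix_id, LinearMap.toMatrix_baseChange,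
      exteriorPower.det_one_sub_smul_toMatrix_eq_sum_trace, Fintype.card_fin]
    refine Finset.sum_congr rfl fun n _ ↦ ?_
    rw [Polynomial.algebraMap_eq, neg_pow]
    ring
  · have h := exteriorPower.det_one_sub_smul_toMatrix_eq_sum_trace b α (1 : k)
    simp only [Algebra.algebraMap_self, RingHom.id_apply, RingHom.coe_id, Matrix.map_id, one_smul,
      Fintype.card_fin] at h
    rw [← LinearMap.det_toMatrix b, map_sub (LinearMap.toMatrix _ _), LinearMap.toMatrix_id, h]

/-- `det (id - t•α) = ∑ (-1)^n tr(Λ^n α) t^n` in `k[t]`, and in particular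
`det (id - α) = ∑ (-1)^n tr(Λ^n α)`. -/
theorem stmt6 {k V : Type*} [Field k] [CharZero k] [AddCommGroup V] [Module k V]
    [FiniteDimensional k V] (α : V →ₗ[k] V) :
    (LinearMap.det (LinearMap.id - (Polynomial.X : k[X]) • LinearMap.baseChange k[X] α) =
      ∑ n ∈ Finset.range (Module.finrank k V + 1),
        (-1 : k[X]) ^ n * Polynomial.C (LinearMap.trace k (⋀[k]^n V) (exteriorPowerMap n α)) *
          Polynomial.X ^ n) ∧
    (LinearMap.det (LinearMap.id - α) =
      ∑ n ∈ Finset.range (Module.finrank k V + 1),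
        (-1 : k) ^ n * LinearMap.trace k (⋀[k]^n V) (exteriorPowerMap n α)) :=
  stmt6_general α
end
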